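/- Let q be a prime power and let v ≥ 2, 1 ≤ k ≤ v, and d be integers. Then A_q(v,d;k) ≤ ⌊ (q^v−1)/(q^k−1) · A_q(v−1,d;k−1) ⌋, where ⌊·⌋ denotes the floor of the rational number. -/

import Mathlib

open scoped Classical

/-- The subspace distance `d_S(X,Y) = dim(X+Y) - dim(X∩Y)` between two subspaces. -/
noncomputable def subspaceDist {F V : Type*} [Field F] [AddCommGroup V] [Module F V]
    (X Y : Submodule F V) : ℕ :=
  Module.finrank F ↥(X ⊔ Y) - Module.finrank F ↥(X ⊓ Y)

/-- `C` is a subspace code with minimum subspace distance at least `d`. -/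
def IsSubspaceCode {F V : Type*} [Field F] [AddCommGroup V] [Module F V]
    (d : ℕ) (C : Finset (Submodule F V)) : Prop :=
  ∀ X ∈ C, ∀ Y ∈ C, X ≠ Y → d ≤ subspaceDist X Y

/-- `A_q(v,d)`: the maximum cardinality of a subspace code in `F^v` (where `#F = q`)
with minimum subspace distance at least `d`. -/
noncomputable def maxCode (F : Type*) [Field F] [Fintype F] (v d : ℕ) : ℕ :=
  sSup {n | ∃ C : Finset (Submodule F (Fin v → F)), IsSubspaceCode d C ∧ C.card = n}

/-- `A_q(v,d;k)`: the maximum cardinality of a constant dimension code in `F^v`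
(where `#F = q`) with minimum subspace distance at least `d` and all codewords of
dimension `k`. -/
noncomputable def maxCodeDim (F : Type*) [Field F] [Fintype F] (v d k : ℕ) : ℕ :=
  sSup {n | ∃ C : Finset (Submodule F (Fin v → F)), IsSubspaceCode d C ∧
    (∀ X ∈ C, Module.finrank F ↥X = k) ∧ C.card = n}

/-- `[x]_q = (q^x - 1)/(q - 1)`, the number of points of `PG(F_q^x)`. -/
def gaussNum (q x : ℕ) : ℕ := ∑ i ∈ Finset.range x, q ^ i

/-! Double count the pairs `(x, X)` with `x` a nonzero vector and `X` a codeword through `x`.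
Each codeword contains `q^k - 1` nonzero vectors. For fixed `x`, a linear map
`F^v → F^(v-1)` with kernel `⟨x⟩` sends the codewords through `x` injectively to
`(k-1)`-dimensional subspaces, and preserves subspace distances because `⟨x⟩` lies in every
sum and intersection of them; so there are at most `A_q(v-1,d;k-1)` such codewords. -/

open Module Submodule Finset

lemma IsSubspaceCode.subset {K V : Type*} [Field K] [AddCommGroup V] [Module K V] {d : ℕ}
    {C C' : Finset (Submodule K V)} (hC : IsSubspaceCode d C) (h : C' ⊆ C) :
    IsSubspaceCode d C' :=
  fun X hX Y hY => hC X (h hX) Y (h hY)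

section CodeCardinality

variable {F : Type*} [Field F] [Fintype F] {v d k : ℕ}

lemma card_le_maxCodeDim {C : Finset (Submodule F (Fin v → F))} (hC : IsSubspaceCode d C)
    (hdim : ∀ X ∈ C, finrank F X = k) : #C ≤ maxCodeDim F v d k := by
  have : Fintype (Submodule F (Fin v → F)) := .ofFinite _
  refine le_csSup ⟨Fintype.card (Submodule F (Fin v → F)), ?_⟩ ⟨C, hC, hdim, rfl⟩
  rintro _ ⟨C', -, -, rfl⟩
  exact card_le_univ C'

lemma maxCodeDim_le {n : ℕ} (h : ∀ C : Finset (Submodule F (Fin v → F)),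
    IsSubspaceCode d C → (∀ X ∈ C, finrank F X = k) → #C ≤ n) : maxCodeDim F v d k ≤ n := by
  refine csSup_le ⟨0, ∅, by simp [IsSubspaceCode], by simp, rfl⟩ ?_
  rintro _ ⟨C, hC, hdim, rfl⟩
  exact h C hC hdim

end CodeCardinality

section MapOfKerLe

variable {K V W : Type*} [Field K] [AddCommGroup V] [Module K V] [AddCommGroup W] [Module K W]
  (φ : V →ₗ[K] W)

lemma finrank_map_add_finrank_ker_of_ker_le [FiniteDimensional K V] {X : Submodule K V}
    (hX : LinearMap.ker φ ≤ X) :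
    finrank K (X.map φ) + finrank K (LinearMap.ker φ) = finrank K X := by
  have h := LinearMap.finrank_range_add_finrank_ker (φ.domRestrict X)
  rwa [LinearMap.range_domRestrict, LinearMap.ker_domRestrict,
    (comapSubtypeEquivOfLe hX).finrank_eq] at h

lemma map_inf_of_ker_le {X Y : Submodule K V} (hY : LinearMap.ker φ ≤ Y) :
    (X ⊓ Y).map φ = X.map φ ⊓ Y.map φ := by
  rw [map_inf_eq_map_inf_comap, comap_map_eq_self hY]

lemma subspaceDist_map_of_ker_le [FiniteDimensional K V] {X Y : Submodule K V}
    (hX : LinearMap.ker φ ≤ X) (hY : LinearMap.ker φ ≤ Y) :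
    subspaceDist (X.map φ) (Y.map φ) = subspaceDist X Y := by
  have hsup := finrank_map_add_finrank_ker_of_ker_le φ (hX.trans le_sup_left : _ ≤ X ⊔ Y)
  have hinf := finrank_map_add_finrank_ker_of_ker_le φ (le_inf hX hY)
  unfold subspaceDist
  rw [← Submodule.map_sup, ← map_inf_of_ker_le φ hY]
  omega

lemma IsSubspaceCode.image_map_of_ker_le [FiniteDimensional K V] {d : ℕ}
    {C : Finset (Submodule K V)} (hC : IsSubspaceCode d C)
    (hker : ∀ X ∈ C, LinearMap.ker φ ≤ X) : IsSubspaceCode d (C.image (map φ)) := by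
  simp only [IsSubspaceCode, mem_image]
  rintro _ ⟨X, hX, rfl⟩ _ ⟨Y, hY, rfl⟩ hne
  rw [subspaceDist_map_of_ker_le φ (hker X hX) (hker Y hY)]
  exact hC X hX Y hY fun h => hne (h ▸ rfl)

lemma card_image_map_of_ker_le {C : Finset (Submodule K V)}
    (hker : ∀ X ∈ C, LinearMap.ker φ ≤ X) : #(C.image (map φ)) = #C :=
  card_image_of_injOn fun X hX Y hY hXY => by
    rw [← comap_map_eq_self (hker X hX), ← comap_map_eq_self (hker Y hY), hXY]

end MapOfKerLe

lemma exists_linearMap_ker_eq_span_singleton {K : Type*} [Field K] {v : ℕ} {x : Fin v → K}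
    (hx : x ≠ 0) : ∃ φ : (Fin v → K) →ₗ[K] (Fin (v - 1) → K), LinearMap.ker φ = K ∙ x := by
  have hquot : finrank K ((Fin v → K) ⧸ K ∙ x) = finrank K (Fin (v - 1) → K) := by
    have h := finrank_quotient_add_finrank (K ∙ x)
    rw [finrank_span_singleton hx, finrank_fin_fun] at h
    rw [finrank_fin_fun]
    omega
  refine ⟨(LinearEquiv.ofFinrankEq _ _ hquot).toLinearMap ∘ₗ (K ∙ x).mkQ, ?_⟩
  rw [LinearMap.ker_comp, LinearEquiv.ker, comap_bot, ker_mkQ]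

section PointCounting

variable {F : Type*} [Field F] [Fintype F] {v d k : ℕ}

lemma card_filter_mem_le_maxCodeDim {C : Finset (Submodule F (Fin v → F))}
    (hC : IsSubspaceCode d C) (hdim : ∀ X ∈ C, finrank F X = k) {x : Fin v → F} (hx : x ≠ 0) :
    #(C.filter (x ∈ ·)) ≤ maxCodeDim F (v - 1) d (k - 1) := by
  obtain ⟨φ, hφ⟩ := exists_linearMap_ker_eq_span_singleton hx
  have hker : ∀ X ∈ C.filter (x ∈ ·), LinearMap.ker φ ≤ X := fun X hX => by
    rw [hφ, span_singleton_le_iff_mem]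
    exact (mem_filter.1 hX).2
  rw [← card_image_map_of_ker_le φ hker]
  refine card_le_maxCodeDim ((hC.subset (filter_subset _ C)).image_map_of_ker_le φ hker) ?_
  simp only [mem_image]
  rintro _ ⟨X, hX, rfl⟩
  have h := finrank_map_add_finrank_ker_of_ker_le φ (hker X hX)
  rw [hφ, finrank_span_singleton hx, hdim X (mem_filter.1 hX).1] at h
  omega

lemma card_filter_mem_erase_zero (X : Submodule F (Fin v → F)) :
    #((univ.erase 0).filter (· ∈ X)) = Fintype.card F ^ finrank F X - 1 := by
  rw [filter_erase, card_erase_of_mem (mem_filter.2 ⟨mem_univ _, X.zero_mem⟩),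
    ← card_eq_pow_finrank (K := F) (V := X), ← Fintype.card_subtype]

lemma card_mul_le_mul_maxCodeDim {C : Finset (Submodule F (Fin v → F))}
    (hC : IsSubspaceCode d C) (hdim : ∀ X ∈ C, finrank F X = k) :
    #C * (Fintype.card F ^ k - 1) ≤
      (Fintype.card F ^ v - 1) * maxCodeDim F (v - 1) d (k - 1) := by
  have hpoints : #((univ : Finset (Fin v → F)).erase 0) = Fintype.card F ^ v - 1 := by
    rw [card_erase_of_mem (mem_univ 0), card_univ, Fintype.card_fun, Fintype.card_fin]
  rw [← hpoints]
  refine card_mul_le_card_mul (fun X x => x ∈ X) (fun X hX => ?_) (fun x hx => ?_)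
  · rw [bipartiteAbove, card_filter_mem_erase_zero, hdim X hX]
  · exact card_filter_mem_le_maxCodeDim hC hdim (ne_of_mem_erase hx)

end PointCounting

theorem johnson_bound_II_point_general (q v d k : ℕ) (F : Type*) [Field F] [Fintype F]
    (hF : Fintype.card F = q) (hk1 : 1 ≤ k) :
    maxCodeDim F v d k ≤
      ⌊((q : ℚ) ^ v - 1) / ((q : ℚ) ^ k - 1) * (maxCodeDim F (v - 1) d (k - 1) : ℚ)⌋₊ := by
  subst hF
  refine maxCodeDim_le fun C hC hdim => Nat.le_floor ?_
  have hcount := card_mul_le_mul_maxCodeDim hC hdim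
  have hqk : 1 < Fintype.card F ^ k := Nat.one_lt_pow (by omega) Fintype.one_lt_card
  have hqv : 1 ≤ Fintype.card F ^ v := Nat.one_le_pow _ _ Fintype.card_pos
  rw [div_mul_eq_mul_div, le_div_iff₀ (sub_pos.2 (by exact_mod_cast hqk))]
  have hcount_rat := (Nat.cast_le (α := ℚ)).2 hcount
  push_cast [Nat.cast_sub hqk.le, Nat.cast_sub hqv] at hcount_rat
  linarith

/-- Johnson type bound II: A_q(v,d;k) ≤ ⌊(q^v-1)/(q^k-1) · A_q(v-1,d;k-1)⌋. -/
theorem johnson_bound_II_point (q v d k : ℕ) (F : Type*) [Field F] [Fintype F]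
    (hF : Fintype.card F = q) (hv : 2 ≤ v) (hk1 : 1 ≤ k) (hkv : k ≤ v) :
    maxCodeDim F v d k ≤
      ⌊((q : ℚ) ^ v - 1) / ((q : ℚ) ^ k - 1) * (maxCodeDim F (v - 1) d (k - 1) : ℚ)⌋₊ :=
  johnson_bound_II_point_general q v d k F hF hk1
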